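/- arXiv:math/0005029 — 4 statements merged into one kernel-verified Lean document; each statement's English description precedes it below -/
import Mathlib

section
/- Let G be a finite group acting transitively and faithfully on a finite set X with N := |X| ≥ 2. Then the number of elements of G that fix at least one point of X is at most (1 − 1/N)·|G|; equivalently, N · #{g ∈ G : ∃ x ∈ X, g·x = x} ≤ (N − 1) · |G|. -/
/-! By Burnside's lemma the average number of fixed points of `g ∈ G` is the number of orbits on
`X`, which is `1`, and the average of its square is the number of orbits on `X × X`, which is at
least `2` (the diagonal is one orbit). If `g` fixes a point then `1 ≤ fix g ≤ N`, so
`fix g ^ 2 + N ≤ (N + 1) fix g`; summing over the elements with a fixed point gives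
`2 |G| + N · #{g | fix g > 0} ≤ (N + 1) |G|`. -/

open MulAction Finset

namespace MulAction

variable {G X Y : Type*} [Group G] [MulAction G X] [MulAction G Y]

lemma fixedBy_prod (g : G) : fixedBy (X × Y) g = fixedBy X g ×ˢ fixedBy Y g := by
  ext ⟨x, y⟩
  simp [Prod.ext_iff]

lemma natCard_fixedBy_prod (g : G) :
    Nat.card (fixedBy (X × Y) g) = Nat.card (fixedBy X g) * Nat.card (fixedBy Y g) := by
  rw [fixedBy_prod, Nat.card_congr (Equiv.Set.prod _ _), Nat.card_prod]

variable (G X) in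
lemma nontrivial_orbitRel_quotient_prod [Nontrivial X] :
    Nontrivial (orbitRel.Quotient G (X × X)) := by
  obtain ⟨x, y, hxy⟩ := exists_pair_ne X
  refine ⟨⟦(x, x)⟧, ⟦(x, y)⟧, fun h ↦ hxy ?_⟩
  obtain ⟨g, hg⟩ := Quotient.exact h
  simp only [Prod.smul_mk, Prod.mk.injEq] at hg
  exact smul_left_cancel g (hg.1.trans hg.2.symm)

variable [Fintype G] [Finite X]

variable (G X) in
lemma sum_natCard_fixedBy_eq_natCard_orbits_mul_card_group :
    ∑ g : G, Nat.card (fixedBy X g) = Nat.card (orbitRel.Quotient G X) * Fintype.card G := by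
  classical
  have := Fintype.ofFinite X
  have := Fintype.ofFinite (orbitRel.Quotient G X)
  simp only [Nat.card_eq_fintype_card]
  exact sum_card_fixedBy_eq_card_orbits_mul_card_group G X

lemma sum_natCard_fixedBy_eq_card_group [Nonempty X] [IsPretransitive G X] :
    ∑ g : G, Nat.card (fixedBy X g) = Fintype.card G := by
  obtain ⟨_⟩ := (pretransitive_iff_unique_quotient_of_nonempty G X).mp ‹_›
  rw [sum_natCard_fixedBy_eq_natCard_orbits_mul_card_group, Nat.card_unique, one_mul]

lemma two_mul_card_group_le_sum_sq_natCard_fixedBy [Nontrivial X] :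
    2 * Fintype.card G ≤ ∑ g : G, Nat.card (fixedBy X g) ^ 2 := by
  have := nontrivial_orbitRel_quotient_prod G X
  have : 2 ≤ Nat.card (orbitRel.Quotient G (X × X)) := Finite.one_lt_card
  calc 2 * Fintype.card G ≤ Nat.card (orbitRel.Quotient G (X × X)) * Fintype.card G := by gcongr
    _ = ∑ g : G, Nat.card (fixedBy X g) ^ 2 := by
      simp only [← sum_natCard_fixedBy_eq_natCard_orbits_mul_card_group, natCard_fixedBy_prod, sq]

end MulAction

lemma Finset.mul_card_filter_pos_add_sum_sq_le {ι : Type*} (s : Finset ι) (f : ι → ℕ) {N : ℕ}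
    (hf : ∀ i ∈ s, f i ≤ N) :
    N * #{i ∈ s | 0 < f i} + ∑ i ∈ s, f i ^ 2 ≤ (N + 1) * ∑ i ∈ s, f i := by
  rw [card_filter, mul_sum, mul_sum, ← sum_add_distrib]
  refine sum_le_sum fun i hi ↦ ?_
  have := hf i hi
  split_ifs with h
  · nlinarith
  · simp_all

theorem stmt0_general (G X : Type*) [Group G] [Fintype G] [Fintype X] [MulAction G X]
    (htrans : ∀ x y : X, ∃ g : G, g • x = y)
    (hN : 2 ≤ Fintype.card X) :
    Fintype.card X * Nat.card {g : G // ∃ x : X, g • x = x} ≤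
      (Fintype.card X - 1) * Fintype.card G := by
  classical
  have : IsPretransitive G X := ⟨htrans⟩
  have : Nontrivial X := Fintype.one_lt_card_iff_nontrivial.mp hN
  have hfixers :
      Nat.card {g : G // ∃ x : X, g • x = x} = #{g : G | 0 < Nat.card (fixedBy X g)} := by
    simp only [Nat.card_eq_fintype_card, Fintype.card_subtype, mem_fixedBy, card_pos,
      filter_nonempty_iff, mem_univ, true_and]
  have key := mul_card_filter_pos_add_sum_sq_le univ (fun g : G ↦ Nat.card (fixedBy X g))
    fun g _ ↦ Finite.card_subtype_le (fixedBy X g)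
  rw [sum_natCard_fixedBy_eq_card_group] at key
  have hsq := two_mul_card_group_le_sum_sq_natCard_fixedBy (G := G) (X := X)
  obtain ⟨n, hn⟩ : ∃ n, Nat.card X = n + 1 := ⟨_, (Nat.succ_pred_eq_of_pos Nat.card_pos).symm⟩
  rw [← Nat.card_eq_fintype_card, hfixers, hn, Nat.add_sub_cancel]
  rw [hn] at key
  nlinarith

/-- **Cameron–Cohen bound.** If a finite group `G` acts transitively and faithfully on a
finite set `X` with `N := |X| ≥ 2`, then the number of elements of `G` fixing at least one
point satisfies `N * #{g | ∃ x, g • x = x} ≤ (N - 1) * |G|`. -/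
theorem stmt0 (G X : Type*) [Group G] [Fintype G] [Fintype X] [MulAction G X]
    (htrans : ∀ x y : X, ∃ g : G, g • x = y)
    (hfaith : ∀ g : G, (∀ x : X, g • x = x) → g = 1)
    (hN : 2 ≤ Fintype.card X) :
    Fintype.card X * Nat.card {g : G // ∃ x : X, g • x = x} ≤
      (Fintype.card X - 1) * Fintype.card G :=
  stmt0_general G X htrans hN
end

section
/- The polynomial f(x) = (x² − 2)(x² − 7)(x² − 14) has no rational root, and yet for every prime p there exists x ∈ ℤ/pℤ with (x² − 2)(x² − 7)(x² − 14) = 0 in ℤ/pℤ. -/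
/-!
`f` factors over `ℚ` into the quadratics `x² - 2`, `x² - 7`, `x² - 14`, none of which has a rational
root since `2`, `7`, `14` are not squares. Modulo a prime `p`, however, the squares form a subgroup
of index at most two in `(ℤ/pℤ)ˣ`, so if neither `2` nor `7` is a square then `14 = 2 · 7` is one.
-/

theorem Rat.sq_ne_natCast_of_not_isSquare {n : ℕ} (hn : ¬IsSquare n) (q : ℚ) : q ^ 2 ≠ n :=
  fun h => hn (Rat.isSquare_natCast_iff.mp ⟨q, by rw [← h, sq]⟩)

namespace FiniteField

variable {F : Type*} [Field F] [Fintype F] [DecidableEq F]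

theorem isSquare_mul_of_not_isSquare {a b : F} (ha : ¬IsSquare a) (hb : ¬IsSquare b) :
    IsSquare (a * b) := by
  have ha₀ : a ≠ 0 := fun h => ha (h ▸ IsSquare.zero)
  have hb₀ : b ≠ 0 := fun h => hb (h ▸ IsSquare.zero)
  refine (quadraticChar_one_iff_isSquare (mul_ne_zero ha₀ hb₀)).mp ?_
  rw [map_mul, quadraticChar_neg_one_iff_not_isSquare.mpr ha,
    quadraticChar_neg_one_iff_not_isSquare.mpr hb, neg_one_mul, neg_neg]

theorem isSquare_or_isSquare_or_isSquare_mul (a b : F) :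
    IsSquare a ∨ IsSquare b ∨ IsSquare (a * b) := by
  by_cases ha : IsSquare a
  · exact .inl ha
  by_cases hb : IsSquare b
  · exact .inr (.inl hb)
  exact .inr (.inr (isSquare_mul_of_not_isSquare ha hb))

end FiniteField

/-- The polynomial `(x² − 2)(x² − 7)(x² − 14)` has no rational root, yet it has a root
modulo every prime `p`. -/
theorem stmt1 :
    (∀ q : ℚ, (q ^ 2 - 2) * (q ^ 2 - 7) * (q ^ 2 - 14) ≠ 0) ∧
    (∀ p : ℕ, p.Prime →
      ∃ x : ZMod p, (x ^ 2 - 2) * (x ^ 2 - 7) * (x ^ 2 - 14) = 0) := by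
  constructor
  · intro q
    have h2 := Rat.sq_ne_natCast_of_not_isSquare (n := 2) (by decide +kernel) q
    have h7 := Rat.sq_ne_natCast_of_not_isSquare (n := 7) (by decide +kernel) q
    have h14 := Rat.sq_ne_natCast_of_not_isSquare (n := 14) (by decide +kernel) q
    push_cast at h2 h7 h14
    exact mul_ne_zero (mul_ne_zero (sub_ne_zero.mpr h2) (sub_ne_zero.mpr h7)) (sub_ne_zero.mpr h14)
  · intro p hp
    have : Fact p.Prime := ⟨hp⟩
    rcases FiniteField.isSquare_or_isSquare_or_isSquare_mul (2 : ZMod p) 7 with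
      ⟨x, hx⟩ | ⟨x, hx⟩ | ⟨x, hx⟩
    · exact ⟨x, by rw [hx, ← sq, sub_self, zero_mul, zero_mul]⟩
    · exact ⟨x, by rw [hx, ← sq, sub_self, mul_zero, zero_mul]⟩
    · refine ⟨x, ?_⟩
      rw [show (14 : ZMod p) = 2 * 7 by norm_num, hx, ← sq, sub_self, mul_zero]
end

section
/- Suppose g ∈ ℤ[x] is square-free with δ := deg g ≥ 1. Then log|Δ_g| ≤ (2δ − 1)·σ(g) + ((2δ − 1)/2)·log(δ + 1) + (δ/2)·log(δ(2δ + 1)/6). -/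
/-- The size of an integer `c`: `1 + ⌈log₂(|c| + 1)⌉`. -/
noncomputable def sizeInt (c : ℤ) : ℕ := 1 + ⌈Real.logb 2 ((c.natAbs : ℝ) + 1)⌉₊

/-- The (sparse) size `σ(g)` of an integer polynomial: the maximum of the sizes of its
nonzero coefficients. -/
noncomputable def sigmaSize (g : Polynomial ℤ) : ℕ :=
  g.support.sup fun i => sizeInt (g.coeff i)

/-- The `(2δ−1) × (2δ−1)` Sylvester-type matrix of `g` and its derivative `g'` (for
`δ := deg g`): the first `δ − 1` rows are shifted copies of the coefficient vector of `g`,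
and the last `δ` rows are shifted copies of the coefficient vector of `g'`. -/
noncomputable def discMatrix (g : Polynomial ℤ) :
    Matrix (Fin (2 * g.natDegree - 1)) (Fin (2 * g.natDegree - 1)) ℤ :=
  fun i j =>
    if (i : ℕ) < g.natDegree - 1 then
      (if (i : ℕ) ≤ (j : ℕ) then g.coeff ((j : ℕ) - (i : ℕ)) else 0)
    else
      (if (i : ℕ) - (g.natDegree - 1) ≤ (j : ℕ) then
        (Polynomial.derivative g).coeff ((j : ℕ) - ((i : ℕ) - (g.natDegree - 1)))
      else 0)

/-- The discriminant `Δ_g = (−1)^(δ(δ−1)/2) · Res(g, g') / lc(g)` of `g ∈ ℤ[x]`,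
where the resultant `Res(g, g')` is the determinant of the Sylvester matrix above. -/
noncomputable def disc (g : Polynomial ℤ) : ℚ :=
  ((-1 : ℚ) ^ (g.natDegree * (g.natDegree - 1) / 2) * ((discMatrix g).det : ℚ)) /
    (g.leadingCoeff : ℚ)

/-!
Up to sign, `Δ_g` is the Sylvester determinant `Res(g, g')` divided by the integer
`lc(g)`, so `|Δ_g| ≤ |Res(g, g')|`. Every coefficient of `g` has absolute value below
`C = 2^(σ(g) - 1)`, so Hadamard's inequality bounds `Res(g, g')²` by the product of the squared
row norms: `(δ + 1)·C²` for each of the `δ - 1` rows of `g`, and `C²·∑_{k ≤ δ} k²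
= C²·δ(δ + 1)(2δ + 1)/6` for each of the `δ` rows of `g'`. Taking logarithms, with
`log 2 ≤ 1`, gives the bound.
-/

open Finset Polynomial

namespace Matrix

open EuclideanSpace in
theorem abs_det_le_prod_norm_row_fin {n : ℕ} (A : Matrix (Fin n) (Fin n) ℝ) :
    |A.det| ≤ ∏ i, ‖WithLp.toLp 2 (A i)‖ := by
  let b := EuclideanSpace.basisFun (Fin n) ℝ
  -- `abs_volumeForm_apply_le` is Hadamard's inequality, and in the standard basis the volume
  -- form is the determinant.
  have h := b.toBasis.orientation.abs_volumeForm_apply_le fun i => WithLp.toLp 2 (A i)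
  rwa [b.toBasis.orientation.volumeForm_robust b rfl, Module.Basis.det_apply,
    ← det_transpose] at h

theorem det_sq_le_prod_sum_sq {ι : Type*} [Fintype ι] [DecidableEq ι] (A : Matrix ι ι ℝ) :
    A.det ^ 2 ≤ ∏ i, ∑ j, A i j ^ 2 := by
  let e := Fintype.equivFin ι
  have hA : |A.det| ≤ ∏ i, √(∑ j, A i j ^ 2) := by
    rw [← det_reindex_self e A, ← e.symm.prod_comp]
    refine (abs_det_le_prod_norm_row_fin _).trans_eq (prod_congr rfl fun i _ => ?_)
    simp only [EuclideanSpace.norm_eq, Real.norm_eq_abs, sq_abs]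
    exact congrArg _ (e.symm.sum_comp fun j => A (e.symm i) j ^ 2)
  calc A.det ^ 2 = |A.det| ^ 2 := (sq_abs _).symm
    _ ≤ (∏ i, √(∑ j, A i j ^ 2)) ^ 2 := by gcongr
    _ = ∏ i, ∑ j, A i j ^ 2 := by
      rw [← prod_pow]
      exact prod_congr rfl fun i _ => Real.sq_sqrt (sum_nonneg fun j _ => sq_nonneg _)

end Matrix

theorem Fin.prod_ite_val_lt {M : Type*} [CommMonoid M] (a b : M) {m n : ℕ} (h : m ≤ n) :
    ∏ i : Fin n, (if (i : ℕ) < m then a else b) = a ^ m * b ^ (n - m) := by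
  have hcard := card_filter_add_card_filter_not (s := univ) fun i : Fin n => (i : ℕ) < m
  rw [Fin.card_filter_val_lt, min_eq_right h, card_univ, Fintype.card_fin] at hcard
  rw [prod_ite, Finset.prod_const, Finset.prod_const, Fin.card_filter_val_lt, min_eq_right h]
  congr 2
  omega

theorem Real.log_abs_le_half_log_of_sq_le {x P : ℝ} (h : x ^ 2 ≤ P) (hP : 1 ≤ P) :
    Real.log |x| ≤ Real.log P / 2 := by
  rcases eq_or_ne x 0 with rfl | hx
  · simpa using div_nonneg (Real.log_nonneg hP) zero_le_two
  · have h2 := Real.log_le_log (by positivity) h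
    rw [Real.log_pow] at h2
    push_cast at h2
    rw [Real.log_abs]
    linarith

theorem abs_div_intCast_le (x : ℝ) (n : ℤ) : |x / n| ≤ |x| := by
  rcases eq_or_ne n 0 with rfl | hn
  · simp
  · rw [abs_div]
    exact div_le_self (abs_nonneg x) (by exact_mod_cast Int.one_le_abs hn)

theorem sum_range_add_one_sq (n : ℕ) :
    ∑ k ∈ range n, ((k : ℝ) + 1) ^ 2 = (n : ℝ) * (n + 1) * (2 * n + 1) / 6 := by
  induction n with
  | zero => simp
  | succ m ih => rw [sum_range_succ, ih]; push_cast; ring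

theorem sum_sq_shift_coeff_le (p : ℤ[X]) (s N : ℕ) :
    ∑ j : Fin N, ((if s ≤ (j : ℕ) then p.coeff (j - s) else 0 : ℤ) : ℝ) ^ 2 ≤
      ∑ k ∈ p.support, (p.coeff k : ℝ) ^ 2 := by
  let f : ℕ → ℝ := fun k => (p.coeff k : ℝ) ^ 2
  set T := univ.filter fun j : Fin N => s ≤ (j : ℕ)
  calc ∑ j : Fin N, ((if s ≤ (j : ℕ) then p.coeff (j - s) else 0 : ℤ) : ℝ) ^ 2
      = ∑ j ∈ T, f (j - s) := by
        rw [sum_filter]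
        exact sum_congr rfl fun j _ => by split_ifs <;> simp [f]
    _ = ∑ k ∈ T.image fun j : Fin N => (j : ℕ) - s, f k :=
        (sum_image fun x hx y hy hxy => Fin.ext (by simp_all [T]; omega)).symm
    _ = ∑ k ∈ T.image (fun j : Fin N => (j : ℕ) - s) with k ∈ p.support, f k :=
        (sum_filter_of_ne fun k _ hk => by simpa [f] using hk).symm
    _ ≤ ∑ k ∈ p.support, f k :=
        sum_le_sum_of_subset_of_nonneg (fun _ hk => (mem_filter.mp hk).2)
          fun _ _ _ => sq_nonneg _

theorem natAbs_add_one_le_two_pow_sizeInt (c : ℤ) : c.natAbs + 1 ≤ 2 ^ (sizeInt c - 1) := by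
  have h := Nat.le_ceil (Real.logb 2 ((c.natAbs : ℝ) + 1))
  rw [Real.logb_le_iff_le_rpow one_lt_two (by positivity), Real.rpow_natCast] at h
  rw [sizeInt, Nat.add_sub_cancel_left]
  exact_mod_cast h

theorem natAbs_coeff_lt_two_pow_sigmaSize (g : ℤ[X]) (k : ℕ) :
    (g.coeff k).natAbs < 2 ^ (sigmaSize g - 1) := by
  by_cases hk : k ∈ g.support
  · have hsize : sizeInt (g.coeff k) ≤ sigmaSize g :=
      le_sup (f := fun i => sizeInt (g.coeff i)) hk
    calc (g.coeff k).natAbs < 2 ^ (sizeInt (g.coeff k) - 1) :=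
          natAbs_add_one_le_two_pow_sizeInt _
      _ ≤ 2 ^ (sigmaSize g - 1) := Nat.pow_le_pow_right two_pos (Nat.sub_le_sub_right hsize 1)
  · simp [notMem_support_iff.mp hk]

theorem coeff_sq_le_sigmaSize (g : ℤ[X]) (k : ℕ) :
    (g.coeff k : ℝ) ^ 2 ≤ ((2 : ℝ) ^ (sigmaSize g - 1)) ^ 2 := by
  have h : ((g.coeff k).natAbs : ℝ) ≤ 2 ^ (sigmaSize g - 1) := by
    exact_mod_cast (natAbs_coeff_lt_two_pow_sigmaSize g k).le
  rw [Nat.cast_natAbs, Int.cast_abs] at h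
  rw [← sq_abs]
  exact pow_le_pow_left₀ (abs_nonneg _) h 2

theorem sum_sq_coeff_le (g : ℤ[X]) :
    ∑ k ∈ g.support, (g.coeff k : ℝ) ^ 2 ≤
      (g.natDegree + 1) * ((2 : ℝ) ^ (sigmaSize g - 1)) ^ 2 := by
  have hcard : #g.support ≤ g.natDegree + 1 :=
    (card_le_card supp_subset_range_natDegree_succ).trans (card_range _).le
  calc ∑ k ∈ g.support, (g.coeff k : ℝ) ^ 2
      ≤ #g.support • ((2 : ℝ) ^ (sigmaSize g - 1)) ^ 2 :=
        sum_le_card_nsmul _ _ _ fun k _ => coeff_sq_le_sigmaSize g k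
    _ ≤ (g.natDegree + 1) * ((2 : ℝ) ^ (sigmaSize g - 1)) ^ 2 := by
        rw [nsmul_eq_mul]
        gcongr
        exact_mod_cast hcard

theorem sum_sq_coeff_derivative_le (g : ℤ[X]) :
    ∑ k ∈ (derivative g).support, ((derivative g).coeff k : ℝ) ^ 2 ≤
      ((2 : ℝ) ^ (sigmaSize g - 1)) ^ 2 *
        (g.natDegree * (g.natDegree + 1) * (2 * g.natDegree + 1) / 6) := by
  have hsupp : (derivative g).support ⊆ range g.natDegree := fun k hk => by
    rw [mem_support_iff, coeff_derivative] at hk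
    exact mem_range.mpr (le_natDegree_of_ne_zero (left_ne_zero_of_mul hk))
  calc ∑ k ∈ (derivative g).support, ((derivative g).coeff k : ℝ) ^ 2
      ≤ ∑ k ∈ range g.natDegree, ((derivative g).coeff k : ℝ) ^ 2 :=
        sum_le_sum_of_subset_of_nonneg hsupp fun _ _ _ => sq_nonneg _
    _ ≤ ∑ k ∈ range g.natDegree,
          ((2 : ℝ) ^ (sigmaSize g - 1)) ^ 2 * ((k : ℝ) + 1) ^ 2 := by
        gcongr with k
        rw [coeff_derivative]
        push_cast
        rw [mul_pow]
        exact mul_le_mul_of_nonneg_right (coeff_sq_le_sigmaSize g (k + 1)) (by positivity)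
    _ = _ := by rw [← mul_sum, sum_range_add_one_sq]

theorem sum_sq_discMatrix_row_le (g : ℤ[X]) (i : Fin (2 * g.natDegree - 1)) :
    ∑ j, ((discMatrix g i j : ℤ) : ℝ) ^ 2 ≤
      if (i : ℕ) < g.natDegree - 1 then (g.natDegree + 1) * ((2 : ℝ) ^ (sigmaSize g - 1)) ^ 2
      else ((2 : ℝ) ^ (sigmaSize g - 1)) ^ 2 *
        (g.natDegree * (g.natDegree + 1) * (2 * g.natDegree + 1) / 6) := by
  by_cases hi : (i : ℕ) < g.natDegree - 1
  · simp only [discMatrix, hi, if_true]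
    exact (sum_sq_shift_coeff_le g i _).trans (sum_sq_coeff_le g)
  · simp only [discMatrix, hi, if_false]
    exact (sum_sq_shift_coeff_le _ _ _).trans (sum_sq_coeff_derivative_le g)

theorem det_discMatrix_sq_le (g : ℤ[X]) :
    ((discMatrix g).det : ℝ) ^ 2 ≤
      ((g.natDegree + 1) * ((2 : ℝ) ^ (sigmaSize g - 1)) ^ 2) ^ (g.natDegree - 1) *
        (((2 : ℝ) ^ (sigmaSize g - 1)) ^ 2 *
          (g.natDegree * (g.natDegree + 1) * (2 * g.natDegree + 1) / 6)) ^ g.natDegree := by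
  rw [Int.cast_det]
  calc _ ≤ ∏ i, ∑ j, ((discMatrix g).map (Int.cast : ℤ → ℝ) i j) ^ 2 :=
        Matrix.det_sq_le_prod_sum_sq _
    _ ≤ _ := prod_le_prod (fun i _ => sum_nonneg fun j _ => sq_nonneg _)
        fun i _ => sum_sq_discMatrix_row_le g i
    _ = _ := by
        rw [Fin.prod_ite_val_lt _ _ (by omega),
          show 2 * g.natDegree - 1 - (g.natDegree - 1) = g.natDegree by omega]

theorem disc_sq_le (g : ℤ[X]) :
    (disc g : ℝ) ^ 2 ≤
      ((g.natDegree + 1) * ((2 : ℝ) ^ (sigmaSize g - 1)) ^ 2) ^ (g.natDegree - 1) *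
        (((2 : ℝ) ^ (sigmaSize g - 1)) ^ 2 *
          (g.natDegree * (g.natDegree + 1) * (2 * g.natDegree + 1) / 6)) ^ g.natDegree := by
  have h := abs_div_intCast_le
    ((-1) ^ (g.natDegree * (g.natDegree - 1) / 2) * (discMatrix g).det) g.leadingCoeff
  rw [abs_mul, abs_pow, abs_neg, abs_one, one_pow, one_mul] at h
  have habs : |(disc g : ℝ)| ≤ |((discMatrix g).det : ℝ)| := by simpa [disc] using h
  rw [← sq_abs]
  exact (pow_le_pow_left₀ (abs_nonneg _) habs 2).trans
    ((sq_abs _).trans_le (det_discMatrix_sq_le g))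

theorem stmt7_general (g : Polynomial ℤ) (hdeg : 1 ≤ g.natDegree) :
    Real.log |(disc g : ℝ)| ≤
      (2 * (g.natDegree : ℝ) - 1) * (sigmaSize g : ℝ) +
      ((2 * (g.natDegree : ℝ) - 1) / 2) * Real.log ((g.natDegree : ℝ) + 1) +
      ((g.natDegree : ℝ) / 2) *
        Real.log ((g.natDegree : ℝ) * (2 * (g.natDegree : ℝ) + 1) / 6) := by
  set δ := g.natDegree
  set C : ℝ := 2 ^ (sigmaSize g - 1) with hC
  have hδ : (1 : ℝ) ≤ δ := by exact_mod_cast hdeg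
  have hC1 : 1 ≤ C ^ 2 := one_le_pow₀ (one_le_pow₀ one_le_two)
  have hS : 1 ≤ (δ : ℝ) * (δ + 1) * (2 * δ + 1) / 6 := by
    have : (1 : ℝ) * 2 * 3 ≤ δ * (δ + 1) * (2 * δ + 1) := by gcongr <;> linarith
    linarith
  have hB₁ : 1 ≤ (δ + 1) * C ^ 2 := by nlinarith
  have hB₂ : 1 ≤ C ^ 2 * (δ * (δ + 1) * (2 * δ + 1) / 6) :=
    one_le_mul_of_one_le_of_one_le hC1 hS
  refine (Real.log_abs_le_half_log_of_sq_le (disc_sq_le g)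
    (one_le_mul_of_one_le_of_one_le (one_le_pow₀ hB₁) (one_le_pow₀ hB₂))).trans ?_
  have hlogC : (2 * δ - 1) * Real.log C ≤ (2 * δ - 1) * sigmaSize g := by
    have hσ : ((sigmaSize g - 1 : ℕ) : ℝ) ≤ sigmaSize g := by exact_mod_cast Nat.sub_le _ _
    rw [hC, Real.log_pow]
    gcongr
    · linarith
    · nlinarith [Real.log_two_lt_d9, Real.log_nonneg one_le_two]
  rw [show (δ : ℝ) * (δ + 1) * (2 * δ + 1) / 6 = (δ + 1) * (δ * (2 * δ + 1) / 6) by ring,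
    Real.log_mul (by positivity) (by positivity), Real.log_pow, Real.log_pow,
    Real.log_mul (by positivity) (by positivity), Real.log_mul (by positivity) (by positivity),
    Real.log_mul (by positivity) (by positivity), Real.log_pow, Nat.cast_sub hdeg]
  push_cast
  linarith

/-- If `g ∈ ℤ[x]` is square-free of degree `δ ≥ 1`, then
`log|Δ_g| ≤ (2δ−1)σ(g) + ((2δ−1)/2)·log(δ+1) + (δ/2)·log(δ(2δ+1)/6)`. -/
theorem stmt7 (g : Polynomial ℤ) (hsf : Squarefree g) (hdeg : 1 ≤ g.natDegree) :
    Real.log |(disc g : ℝ)| ≤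
      (2 * (g.natDegree : ℝ) - 1) * (sigmaSize g : ℝ) +
      ((2 * (g.natDegree : ℝ) - 1) / 2) * Real.log ((g.natDegree : ℝ) + 1) +
      ((g.natDegree : ℝ) / 2) *
        Real.log ((g.natDegree : ℝ) * (2 * (g.natDegree : ℝ) + 1) / 6) :=
  stmt7_general g hdeg
end

section
/- Let α := 2 − 3/(4 log 2), where log denotes the natural logarithm. Then for every natural number d and every integer j with 0 ≤ j ≤ d, one has C(d, j) · √(d + 1) ≤ 2^{d + α}, where C(d, j) denotes the binomial coefficient. -/
/-!
Every binomial coefficient satisfies `(d + 1) C(d, j)² ≤ 4^d`, i.e. `C(d, j) √(d + 1) ≤ 2^d`,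
and `α ≥ 0` because `log 2 ≥ 3/8`. The squared bound reduces to the central coefficient, for
which the ratio `(2n + 1) C(2n, n)² / 16^n` is nonincreasing in `n`: by
`(n + 1) C(2n + 2, n + 1) = 2 (2n + 1) C(2n, n)` one step multiplies it by
`4 (2n + 1) (2n + 3) / (16 (n + 1)²) ≤ 1`.
-/

namespace Nat

theorem two_mul_add_one_mul_centralBinom_sq_le (n : ℕ) :
    (2 * n + 1) * centralBinom n ^ 2 ≤ 16 ^ n := by
  induction n with
  | zero => simp
  | succ n ih =>
    have hrec := succ_mul_centralBinom_succ n
    have hstep : (n + 1) ^ 2 * ((2 * (n + 1) + 1) * centralBinom (n + 1) ^ 2)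
        ≤ (n + 1) ^ 2 * 16 ^ (n + 1) :=
      calc (n + 1) ^ 2 * ((2 * (n + 1) + 1) * centralBinom (n + 1) ^ 2)
          = (2 * n + 3) * ((n + 1) * centralBinom (n + 1)) ^ 2 := by ring
        _ = 4 * (2 * n + 3) * (2 * n + 1) * ((2 * n + 1) * centralBinom n ^ 2) := by
          rw [hrec]; ring
        _ ≤ 4 * (2 * n + 3) * (2 * n + 1) * 16 ^ n := Nat.mul_le_mul_left _ ih
        _ ≤ 16 * (n + 1) ^ 2 * 16 ^ n := Nat.mul_le_mul_right _ (by nlinarith)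
        _ = (n + 1) ^ 2 * 16 ^ (n + 1) := by ring
    exact Nat.le_of_mul_le_mul_left hstep (by positivity)

theorem two_mul_choose_two_mul_add_one (n : ℕ) :
    2 * (2 * n + 1).choose n = centralBinom (n + 1) := by
  rw [centralBinom_eq_two_mul_choose, show 2 * (n + 1) = 2 * n + 1 + 1 by ring,
    choose_succ_succ', choose_symm_half, two_mul]

theorem succ_mul_choose_half_sq_le (d : ℕ) : (d + 1) * d.choose (d / 2) ^ 2 ≤ 4 ^ d := by
  obtain ⟨n, rfl | rfl⟩ := even_or_odd' d
  · rw [Nat.mul_div_cancel_left n two_pos, ← centralBinom_eq_two_mul_choose, pow_mul]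
    exact two_mul_add_one_mul_centralBinom_sq_le n
  · have hhalf : (2 * n + 1) / 2 = n := by omega
    have hcentral := two_mul_add_one_mul_centralBinom_sq_le (n + 1)
    rw [hhalf]
    rw [← two_mul_choose_two_mul_add_one] at hcentral
    have : 4 * ((2 * n + 1 + 1) * (2 * n + 1).choose n ^ 2) ≤ 4 * 4 ^ (2 * n + 1) :=
      calc 4 * ((2 * n + 1 + 1) * (2 * n + 1).choose n ^ 2)
          ≤ (2 * (n + 1) + 1) * (2 * (2 * n + 1).choose n) ^ 2 := by nlinarith
        _ ≤ 16 ^ (n + 1) := hcentral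
        _ = 4 * 4 ^ (2 * n + 1) := by rw [pow_succ, pow_succ, pow_mul]; norm_num; ring
    omega

theorem succ_mul_choose_sq_le (d j : ℕ) : (d + 1) * d.choose j ^ 2 ≤ 4 ^ d :=
  (Nat.mul_le_mul_left _ (Nat.pow_le_pow_left (choose_le_middle j d) 2)).trans
    (succ_mul_choose_half_sq_le d)

end Nat

theorem choose_mul_sqrt_succ_le_two_pow (d j : ℕ) :
    (d.choose j : ℝ) * √(d + 1) ≤ 2 ^ d := by
  have hsq : ((d + 1) * d.choose j ^ 2 : ℝ) ≤ (2 ^ d) ^ 2 := by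
    rw [← pow_mul, mul_comm d, pow_mul]
    exact_mod_cast Nat.succ_mul_choose_sq_le d j
  calc (d.choose j : ℝ) * √(d + 1) = √((d + 1) * d.choose j ^ 2) := by
        rw [Real.sqrt_mul (by positivity), Real.sqrt_sq (by positivity), mul_comm]
    _ ≤ √((2 ^ d) ^ 2) := Real.sqrt_le_sqrt hsq
    _ = 2 ^ d := Real.sqrt_sq (by positivity)

theorem three_div_four_mul_log_two_le_two : 3 / (4 * Real.log 2) ≤ 2 := by
  have hlog := Real.log_two_gt_d9
  rw [div_le_iff₀ (by linarith)]
  linarith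

theorem stmt10_general (d j : ℕ) :
    (d.choose j : ℝ) * Real.sqrt (d + 1) ≤ (2 : ℝ) ^ ((d : ℝ) + (2 - 3 / (4 * Real.log 2))) := by
  calc (d.choose j : ℝ) * Real.sqrt (d + 1) ≤ (2 : ℝ) ^ d := choose_mul_sqrt_succ_le_two_pow d j
    _ = (2 : ℝ) ^ (d : ℝ) := (Real.rpow_natCast 2 d).symm
    _ ≤ (2 : ℝ) ^ ((d : ℝ) + (2 - 3 / (4 * Real.log 2))) :=
      Real.rpow_le_rpow_of_exponent_le one_le_two
        (by linarith [three_div_four_mul_log_two_le_two])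

/-- Let `α := 2 − 3/(4 log 2)`. For all naturals `j ≤ d`, `C(d, j) · √(d + 1) ≤ 2^(d + α)`. -/
theorem stmt10 (d j : ℕ) (hj : j ≤ d) :
    (d.choose j : ℝ) * Real.sqrt (d + 1) ≤ (2 : ℝ) ^ ((d : ℝ) + (2 - 3 / (4 * Real.log 2))) :=
  stmt10_general d j
end
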